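/- Let n ≥ 3 and 1 ≤ p ≤ n−1. Let E be a real symmetric n×n matrix with vanishing trace, let α be a totally antisymmetric map on p-tuples of indices from {1,…,n}, and let R be a real number satisfying R ≥ √((n−1)/n) · (n(n−1)|n−2p|/((n−p)(n−2))) · ‖E‖_F. Then ((n−2p)/(n−2))·∑_{i,j,i₂,…,i_p=1}^{n} E_{ij} α(i,i₂,…,i_p) α(j,i₂,…,i_p) + ((n−p)·R/(n(n−1)))·|α|² ≥ 0. -/

import Mathlib

/-!
Fix all arguments of `α` but the first: the contraction becomes a sum, over these slices `v`,
of quadratic forms `vᵀ E v`. As `E` is traceless, `vᵀ E v = ⟨E, v vᵀ - (|v|²/n) I⟩_F`, and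
`‖v vᵀ - (|v|²/n) I‖_F = √((n-1)/n) |v|²`, so Cauchy–Schwarz gives
`|vᵀ E v| ≤ √((n-1)/n) ‖E‖_F |v|²`. Summed over the slices, this bounds the first term by the
second one under the hypothesis on `R`.
-/

open Finset

section TracelessQuadForm

variable {ι : Type*} [Fintype ι] [DecidableEq ι]

lemma sum_sum_mul_sub_diag_of_trace_eq_zero {E : Matrix ι ι ℝ} (hE : E.trace = 0)
    (v : ι → ℝ) (c : ℝ) :
    ∑ i, ∑ j, E i j * (v i * v j - if i = j then c else 0) =
      ∑ i, ∑ j, E i j * v i * v j := by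
  have hdiag : ∑ i, ∑ j, E i j * (if i = j then c else 0) = E.trace * c := by
    simp [Matrix.trace, sum_mul]
  simp only [mul_sub, sum_sub_distrib, hdiag, hE, zero_mul, sub_zero, mul_assoc]

lemma sum_sum_sq_mul_sub_diag (v : ι → ℝ) (c : ℝ) :
    ∑ i, ∑ j, (v i * v j - if i = j then c else 0) ^ 2 =
      (∑ i, v i ^ 2) ^ 2 - 2 * c * ∑ i, v i ^ 2 + Fintype.card ι * c ^ 2 := by
  have hpt : ∀ i j, (v i * v j - if i = j then c else 0) ^ 2 =
      v i ^ 2 * v j ^ 2 + (if i = j then c ^ 2 - 2 * c * v i ^ 2 else 0) := by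
    intro i j
    by_cases h : i = j <;> simp [h] <;> ring
  simp only [hpt, sum_add_distrib, sum_ite_eq, mem_univ, if_true,
    ← mul_sum, ← sum_mul, sum_sub_distrib, sum_const,
    card_univ, nsmul_eq_mul]
  ring

lemma sq_sum_sum_mul_le_of_trace_eq_zero [Nonempty ι] {E : Matrix ι ι ℝ} (hE : E.trace = 0)
    (v : ι → ℝ) :
    (∑ i, ∑ j, E i j * v i * v j) ^ 2 ≤
      ((Fintype.card ι - 1) / Fintype.card ι) * (∑ i, ∑ j, E i j ^ 2) * (∑ i, v i ^ 2) ^ 2 := by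
  set N : ℝ := (Fintype.card ι : ℝ)
  set s := ∑ i, v i ^ 2
  have hN : N ≠ 0 := by positivity
  have hCS := sum_mul_sq_le_sq_mul_sq (univ : Finset (ι × ι)) (fun x => E x.1 x.2)
    (fun x => v x.1 * v x.2 - if x.1 = x.2 then s / N else 0)
  simp only [univ_product_univ.symm, sum_product] at hCS
  rw [sum_sum_mul_sub_diag_of_trace_eq_zero hE, sum_sum_sq_mul_sub_diag] at hCS
  calc _ ≤ _ := hCS
    _ = _ := by field_simp; ring

lemma abs_sum_sum_mul_le_of_trace_eq_zero [Nonempty ι] {E : Matrix ι ι ℝ} (hE : E.trace = 0)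
    (v : ι → ℝ) :
    |∑ i, ∑ j, E i j * v i * v j| ≤
      √((Fintype.card ι - 1) / Fintype.card ι) * √(∑ i, ∑ j, E i j ^ 2) * ∑ i, v i ^ 2 := by
  have hN : (1 : ℝ) ≤ Fintype.card ι := by exact_mod_cast Fintype.card_pos
  have hs : 0 ≤ ∑ i, v i ^ 2 := by positivity
  calc _ ≤ √((Fintype.card ι - 1) / Fintype.card ι * (∑ i, ∑ j, E i j ^ 2) * (∑ i, v i ^ 2) ^ 2) :=
        Real.abs_le_sqrt (sq_sum_sum_mul_le_of_trace_eq_zero hE v)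
    _ = _ := by
        rw [Real.sqrt_mul (by positivity), Real.sqrt_mul (div_nonneg (by linarith) (by linarith)),
          Real.sqrt_sq hs]

end TracelessQuadForm

section Contraction

variable {κ ι : Type*} [Fintype κ] [DecidableEq κ] [Fintype ι]

lemma sum_sum_mul_update_eq_sum_funSplitAt (E : Matrix ι ι ℝ) (α : (κ → ι) → ℝ) (k : κ) :
    ∑ I, ∑ j, E (I k) j * α I * α (Function.update I k j) =
      ∑ r, ∑ a, ∑ b, E a b * α ((Equiv.funSplitAt k ι).symm (a, r)) *
        α ((Equiv.funSplitAt k ι).symm (b, r)) := by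
  have hupdate : ∀ a b r, Function.update ((Equiv.funSplitAt k ι).symm (a, r)) k b =
      (Equiv.funSplitAt k ι).symm (b, r) := by
    intro a b r
    ext i
    by_cases h : i = k
    · subst h; simp
    · simp [h]
  rw [← (Equiv.funSplitAt k ι).symm.sum_comp, Fintype.sum_prod_type, sum_comm]
  simp [hupdate]

lemma sum_sq_eq_sum_funSplitAt (α : (κ → ι) → ℝ) (k : κ) :
    ∑ I, α I ^ 2 = ∑ r, ∑ a, α ((Equiv.funSplitAt k ι).symm (a, r)) ^ 2 := by
  rw [← (Equiv.funSplitAt k ι).symm.sum_comp, Fintype.sum_prod_type, sum_comm]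

lemma abs_sum_sum_mul_update_le [DecidableEq ι] [Nonempty ι] {E : Matrix ι ι ℝ}
    (hE : E.trace = 0) (α : (κ → ι) → ℝ) (k : κ) :
    |∑ I, ∑ j, E (I k) j * α I * α (Function.update I k j)| ≤
      √((Fintype.card ι - 1) / Fintype.card ι) * √(∑ i, ∑ j, E i j ^ 2) * ∑ I, α I ^ 2 := by
  rw [sum_sum_mul_update_eq_sum_funSplitAt, sum_sq_eq_sum_funSplitAt α k, mul_sum]
  exact (abs_sum_le_sum_abs _ _).trans
    (sum_le_sum fun r _ => abs_sum_sum_mul_le_of_trace_eq_zero hE _)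

end Contraction

lemma mul_add_mul_mul_nonneg_of_abs_le {c d R S A K : ℝ} (hS : |S| ≤ K * A) (hA : 0 ≤ A)
    (hd : 0 < d) (hR : |c| * K / d ≤ R) : 0 ≤ c * S + d * R * A := by
  have hcS : -(|c| * (K * A)) ≤ c * S := by
    calc -(|c| * (K * A)) ≤ -(|c| * |S|) := by gcongr
      _ = -|c * S| := by rw [abs_mul]
      _ ≤ c * S := neg_abs_le _
  have hdR : |c| * K ≤ d * R := by rwa [div_le_iff₀' hd] at hR
  nlinarith [mul_le_mul_of_nonneg_right hdR hA]

theorem stmt_9_general (n p : ℕ) (hn : 3 ≤ n) (hp : 1 ≤ p) (hpn : p ≤ n - 1)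
    (E : Matrix (Fin n) (Fin n) ℝ)
    (htrace : ∑ i, E i i = 0)
    (α : (Fin p → Fin n) → ℝ)
    (R : ℝ)
    (hR : R ≥ Real.sqrt (((n : ℝ) - 1) / n) *
        ((n : ℝ) * ((n : ℝ) - 1) * |(n : ℝ) - 2 * (p : ℝ)| /
          (((n : ℝ) - (p : ℝ)) * ((n : ℝ) - 2))) *
        Real.sqrt (∑ i, ∑ j, (E i j) ^ 2)) :
    0 ≤ (((n : ℝ) - 2 * (p : ℝ)) / ((n : ℝ) - 2)) *
          (∑ I : Fin p → Fin n, ∑ j : Fin n,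
            E (I ⟨0, hp⟩) j * α I * α (Function.update I ⟨0, hp⟩ j)) +
        (((n : ℝ) - (p : ℝ)) * R / ((n : ℝ) * ((n : ℝ) - 1))) *
          ∑ I : Fin p → Fin n, (α I) ^ 2 := by
  have : Nonempty (Fin n) := ⟨⟨0, by omega⟩⟩
  have hS := abs_sum_sum_mul_update_le htrace α ⟨0, hp⟩
  rw [Fintype.card_fin] at hS
  have hn2 : (0 : ℝ) < n - 2 := by
    have : (3 : ℝ) ≤ n := by exact_mod_cast hn
    linarith
  have hnp : (0 : ℝ) < n - p := by
    have : ((p + 1 : ℕ) : ℝ) ≤ n := by exact_mod_cast (by omega : p + 1 ≤ n)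
    push_cast at this
    linarith
  have hd : (0 : ℝ) < (n - p) / (n * (n - 1)) := by
    have : (1 : ℝ) < n := by linarith
    positivity
  have hR' : |((n : ℝ) - 2 * p) / (n - 2)| * (√((n - 1) / n) * √(∑ i, ∑ j, E i j ^ 2)) /
      ((n - p) / (n * (n - 1))) ≤ R :=
    le_of_eq_of_le (by rw [abs_div, abs_of_pos hn2]; field_simp) hR
  convert mul_add_mul_mul_nonneg_of_abs_le hS (by positivity) hd hR' using 2
  ring

/-- The pointwise algebraic core of Theorem 4.1: if the scalar curvature `R`
satisfies `R ≥ √((n-1)/n) · (n(n-1)|n-2p|/((n-p)(n-2))) · ‖E‖_F` for the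
traceless Ricci tensor `E`, then the Weitzenböck curvature term of any
harmonic `p`-form is nonnegative. -/
theorem stmt_9 (n p : ℕ) (hn : 3 ≤ n) (hp : 1 ≤ p) (hpn : p ≤ n - 1)
    (E : Matrix (Fin n) (Fin n) ℝ) (hsymm : ∀ i j, E i j = E j i)
    (htrace : ∑ i, E i i = 0)
    (α : (Fin p → Fin n) → ℝ)
    (hanti : ∀ (I : Fin p → Fin n) (k l : Fin p), k ≠ l →
      α (I ∘ Equiv.swap k l) = -α I)
    (R : ℝ)
    (hR : R ≥ Real.sqrt (((n : ℝ) - 1) / n) *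
        ((n : ℝ) * ((n : ℝ) - 1) * |(n : ℝ) - 2 * (p : ℝ)| /
          (((n : ℝ) - (p : ℝ)) * ((n : ℝ) - 2))) *
        Real.sqrt (∑ i, ∑ j, (E i j) ^ 2)) :
    0 ≤ (((n : ℝ) - 2 * (p : ℝ)) / ((n : ℝ) - 2)) *
          (∑ I : Fin p → Fin n, ∑ j : Fin n,
            E (I ⟨0, hp⟩) j * α I * α (Function.update I ⟨0, hp⟩ j)) +
        (((n : ℝ) - (p : ℝ)) * R / ((n : ℝ) * ((n : ℝ) - 1))) *
          ∑ I : Fin p → Fin n, (α I) ^ 2 :=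
  stmt_9_general n p hn hp hpn E htrace α R hR
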